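/- Every Nikodym set B in F_q^2 satisfies |B| >= min( q^2 - floor(q/3)(q-1) - 2q , 3*floor(q/3)*(q - 1 - floor(q/3)) ). -/

import Mathlib

def line {n : ℕ} {F : Type} [Field F] (a v : Fin n → F) : Set (Fin n → F) :=
  {y | ∃ t : F, y = a + t • v}

def IsNikodym {n : ℕ} {F : Type} [Field F] (B : Set (Fin n → F)) : Prop :=
  ∀ x ∉ B, ∃ a v : Fin n → F, v ≠ 0 ∧ line a v ∩ Bᶜ = {x}

/-!
Every point `x ∉ B` has a tangent direction: the line through `x` in that direction meets `Bᶜ`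
only at `x`. Distinct points with the same tangent direction lie on disjoint parallel lines, so
each of the `q + 1` direction classes has at most `q` points. Let `k = ⌊q/3⌋`. If three classes
have at least `k` points, the `k (q - 1)` points of the punctured tangent lines of `k` points of
each class lie in `B`, and lines of different directions meet at most once, so inclusion–exclusion
gives `|B| ≥ 3k(q - 1) - 3k²`. Otherwise all classes but two have fewer than `k` points, so
`|Bᶜ| ≤ 2q + (q + 1)(k - 1) ≤ 2q + k(q - 1)`.
-/

open Finset
open scoped LinearAlgebra.Projectivization

theorem Finset.card_add_card_add_card_le {α : Type*} [DecidableEq α] (s t u : Finset α) :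
    #s + #t + #u ≤ #(s ∪ t ∪ u) + #(s ∩ t) + #(s ∩ u) + #(t ∩ u) := by
  have hst := card_union_add_card_inter s t
  have hstu := card_union_add_card_inter (s ∪ t) u
  have hu : #((s ∪ t) ∩ u) ≤ #(s ∩ u) + #(t ∩ u) := by
    rw [union_inter_distrib_right]; exact card_union_le _ _
  omega

theorem Finset.sum_le_card_filter_mul_add {ι : Type*} [Fintype ι] (g : ι → ℕ) {q : ℕ}
    (hg : ∀ i, g i ≤ q) (k : ℕ) :
    ∑ i, g i ≤ #{i | k ≤ g i} * q + Fintype.card ι * (k - 1) := by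
  rw [← sum_filter_add_sum_filter_not univ (fun i => k ≤ g i)]
  gcongr
  · simpa using sum_le_card_nsmul _ g q fun i _ => hg i
  · calc ∑ i with ¬k ≤ g i, g i ≤ #{i | ¬k ≤ g i} * (k - 1) := by
          simpa using sum_le_card_nsmul _ g (k - 1) fun i hi => by simp at hi; omega
      _ ≤ Fintype.card ι * (k - 1) := Nat.mul_le_mul_right _ (card_le_univ _)

theorem Nat.add_one_mul_sub_one_le_mul_sub_one {q k : ℕ} (h : 2 * k ≤ q + 1) :
    (q + 1) * (k - 1) ≤ k * (q - 1) := by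
  rcases Nat.eq_zero_or_pos k with rfl | hk
  · simp
  · have : (q + 1) * (k - 1) + (q + 1 - 2 * k) = k * (q - 1) := by
      zify [hk, h, (by omega : 1 ≤ q)]; ring
    omega

section Lines

variable {n : ℕ} {F : Type} [Field F]

theorem self_mem_line (x v : Fin n → F) : x ∈ line x v := ⟨0, by simp⟩

theorem line_eq_of_mem {a v x : Fin n → F} (h : x ∈ line a v) : line a v = line x v := by
  obtain ⟨s, rfl⟩ := h
  ext y
  constructor
  · rintro ⟨t, rfl⟩; exact ⟨t - s, by module⟩
  · rintro ⟨t, rfl⟩; exact ⟨s + t, by module⟩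

theorem line_smul (x v : Fin n → F) {c : F} (hc : c ≠ 0) : line x (c • v) = line x v := by
  ext y
  constructor
  · rintro ⟨t, rfl⟩; exact ⟨t * c, by rw [mul_smul]⟩
  · rintro ⟨t, rfl⟩; exact ⟨t / c, by rw [smul_smul, div_mul_cancel₀ _ hc]⟩

theorem line_mk_rep (x : Fin n → F) {v : Fin n → F} (hv : v ≠ 0) :
    line x (Projectivization.mk F v hv).rep = line x v := by
  obtain ⟨a, ha⟩ := Projectivization.exists_smul_eq_mk_rep F v hv
  rw [← ha, Units.smul_def, line_smul x v a.ne_zero]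

theorem line_inter_line_subsingleton {p p' : ℙ F (Fin n → F)} (h : p ≠ p') (x x' : Fin n → F) :
    (line x p.rep ∩ line x' p'.rep).Subsingleton := by
  rintro _ ⟨⟨t, rfl⟩, ⟨t', ht'⟩⟩ _ ⟨⟨s, rfl⟩, ⟨s', hs'⟩⟩
  obtain rfl | hts := eq_or_ne t s
  · rfl
  have hdiff : (t - s) • p.rep = (t' - s') • p'.rep := by
    calc (t - s) • p.rep = (x + t • p.rep) - (x + s • p.rep) := by module
      _ = (t' - s') • p'.rep := by rw [ht', hs']; module
  refine absurd ?_ h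
  rw [← p.mk_rep, ← p'.mk_rep, Projectivization.mk_eq_mk_iff']
  refine ⟨(t' - s') / (t - s), ?_⟩
  rw [div_eq_inv_mul, mul_smul, ← hdiff, inv_smul_smul₀ (sub_ne_zero.mpr hts)]

end Lines

section Tangent

variable {n : ℕ} {F : Type} [Field F]

/-- Directions are the points of `ℙ F (Fin n → F)`; in the plane there are `q + 1` of them. -/
def IsTangent (B : Set (Fin n → F)) (x : Fin n → F) (p : ℙ F (Fin n → F)) : Prop :=
  line x p.rep ∩ Bᶜ = {x}

theorem IsNikodym.exists_isTangent {B : Set (Fin n → F)} (hB : IsNikodym B) {x : Fin n → F}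
    (hx : x ∉ B) : ∃ p, IsTangent B x p := by
  obtain ⟨a, v, hv, hl⟩ := hB x hx
  have hxa : x ∈ line a v := (hl.symm ▸ Set.mem_singleton x : x ∈ line a v ∩ Bᶜ).1
  refine ⟨Projectivization.mk F v hv, ?_⟩
  rwa [IsTangent, line_mk_rep, ← line_eq_of_mem hxa]

variable {B : Set (Fin n → F)} {x y : Fin n → F} {p : ℙ F (Fin n → F)}

theorem IsTangent.notMem (h : IsTangent B x p) : x ∉ B :=
  (h.symm ▸ Set.mem_singleton x : x ∈ line x p.rep ∩ Bᶜ).2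

theorem IsTangent.line_diff_subset (h : IsTangent B x p) : line x p.rep \ {x} ⊆ B := by
  rintro z ⟨hz, hzx⟩
  by_contra hzB
  exact hzx (h ▸ ⟨hz, hzB⟩)

theorem IsTangent.disjoint_line (hx : IsTangent B x p) (hy : IsTangent B y p) (hxy : x ≠ y) :
    Disjoint (line x p.rep) (line y p.rep) := by
  refine Set.disjoint_left.mpr fun z hzx hzy => hxy ?_
  have hyx : y ∈ line x p.rep := by
    rw [line_eq_of_mem hzx, ← line_eq_of_mem hzy]
    exact self_mem_line y p.rep
  exact (hx ▸ ⟨hyx, hy.notMem⟩ : y ∈ ({x} : Set _)).symm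

theorem isTangent_of_mem_filter [Fintype F] [DecidablePred (· ∈ B)]
    [DecidableEq (ℙ F (Fin n → F))] {D : (Fin n → F) → ℙ F (Fin n → F)}
    (hD : ∀ x ∉ B, IsTangent B x (D x)) (hx : x ∈ ({x | x ∉ B ∧ D x = p} : Finset (Fin n → F))) :
    IsTangent B x p := by
  simp only [mem_filter, mem_univ, true_and] at hx
  exact hx.2 ▸ hD x hx.1

end Tangent

section Counting

variable {n : ℕ} {F : Type} [Field F] [Fintype F] [DecidableEq F]

def lineFinset (x v : Fin n → F) : Finset (Fin n → F) := univ.image fun t : F => x + t • v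

@[simp]
theorem coe_lineFinset (x v : Fin n → F) : (lineFinset x v : Set (Fin n → F)) = line x v := by
  ext y
  simp [lineFinset, line, eq_comm]

theorem card_lineFinset (x : Fin n → F) {v : Fin n → F} (hv : v ≠ 0) :
    #(lineFinset x v) = Fintype.card F := by
  rw [lineFinset, card_image_of_injective _ fun s t hst => smul_left_injective F hv
    (add_left_cancel hst), card_univ]

noncomputable def fan (S : Finset (Fin n → F)) (p : ℙ F (Fin n → F)) : Finset (Fin n → F) :=
  S.biUnion fun x => (lineFinset x p.rep).erase x

variable {B : Set (Fin n → F)} {S : Finset (Fin n → F)} {p : ℙ F (Fin n → F)}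

theorem card_mul_card_le_of_isTangent (hS : ∀ x ∈ S, IsTangent B x p) :
    #S * Fintype.card F ≤ Fintype.card F ^ n := by
  have hdisj : (S : Set (Fin n → F)).PairwiseDisjoint fun x => lineFinset x p.rep :=
    fun x hx y hy hxy => by
      simpa [Function.onFun, ← disjoint_coe] using (hS x hx).disjoint_line (hS y hy) hxy
  calc #S * Fintype.card F = #(S.biUnion fun x => lineFinset x p.rep) := by
        rw [card_biUnion hdisj, sum_const_nat fun x _ => card_lineFinset x p.rep_nonzero]
    _ ≤ Fintype.card (Fin n → F) := card_le_univ _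
    _ = Fintype.card F ^ n := by simp

theorem coe_fan_subset (hS : ∀ x ∈ S, IsTangent B x p) : (fan S p : Set (Fin n → F)) ⊆ B := by
  intro z hz
  simp only [fan, coe_biUnion, coe_erase, coe_lineFinset, Set.mem_iUnion] at hz
  obtain ⟨x, hx, hzx⟩ := hz
  exact (hS x hx).line_diff_subset hzx

theorem card_fan (hS : ∀ x ∈ S, IsTangent B x p) : #(fan S p) = #S * (Fintype.card F - 1) := by
  have hdisj : (S : Set (Fin n → F)).PairwiseDisjoint fun x => (lineFinset x p.rep).erase x :=
    fun x hx y hy hxy => by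
      have := (hS x hx).disjoint_line (hS y hy) hxy
      rw [← coe_lineFinset, ← coe_lineFinset, disjoint_coe] at this
      exact this.mono (erase_subset _ _) (erase_subset _ _)
  have hx (x : Fin n → F) : x ∈ lineFinset x p.rep := by
    rw [← mem_coe, coe_lineFinset]
    exact self_mem_line x p.rep
  rw [fan, card_biUnion hdisj, sum_const_nat fun x _ => ?_]
  rw [card_erase_of_mem (hx x), card_lineFinset x p.rep_nonzero]

theorem card_fan_inter_fan_le {p' : ℙ F (Fin n → F)} (h : p ≠ p') (S S' : Finset (Fin n → F)) :
    #(fan S p ∩ fan S' p') ≤ #S * #S' := by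
  have hsub : fan S p ∩ fan S' p' ⊆
      S.biUnion fun x => S'.biUnion fun y => lineFinset x p.rep ∩ lineFinset y p'.rep := by
    intro z hz
    simp only [fan, mem_inter, mem_biUnion, mem_erase] at hz ⊢
    obtain ⟨⟨x, hx, -, hzx⟩, ⟨y, hy, -, hzy⟩⟩ := hz
    exact ⟨x, hx, y, hy, hzx, hzy⟩
  have hmeet (x y : Fin n → F) : #(lineFinset x p.rep ∩ lineFinset y p'.rep) ≤ 1 := by
    rw [card_le_one_iff_subsingleton, coe_inter, coe_lineFinset, coe_lineFinset]
    exact line_inter_line_subsingleton h x y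
  calc #(fan S p ∩ fan S' p')
      ≤ ∑ x ∈ S, ∑ y ∈ S', #(lineFinset x p.rep ∩ lineFinset y p'.rep) :=
        (card_le_card hsub).trans <| card_biUnion_le.trans <| sum_le_sum fun _ _ => card_biUnion_le
    _ ≤ ∑ x ∈ S, ∑ y ∈ S', 1 := sum_le_sum fun x _ => sum_le_sum fun y _ => hmeet x y
    _ = #S * #S' := by simp

theorem three_mul_mul_le_ncard_of_isTangent {k : ℕ} {p₁ p₂ p₃ : ℙ F (Fin n → F)}
    (h₁₂ : p₁ ≠ p₂) (h₁₃ : p₁ ≠ p₃) (h₂₃ : p₂ ≠ p₃) {T₁ T₂ T₃ : Finset (Fin n → F)}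
    (hT₁ : ∀ x ∈ T₁, IsTangent B x p₁) (hT₂ : ∀ x ∈ T₂, IsTangent B x p₂)
    (hT₃ : ∀ x ∈ T₃, IsTangent B x p₃) (hk₁ : k ≤ #T₁) (hk₂ : k ≤ #T₂) (hk₃ : k ≤ #T₃) :
    3 * k * (Fintype.card F - 1 - k) ≤ B.ncard := by
  obtain ⟨S₁, hS₁, rfl⟩ := exists_subset_card_eq hk₁
  obtain ⟨S₂, hS₂, hk₂⟩ := exists_subset_card_eq hk₂
  obtain ⟨S₃, hS₃, hk₃⟩ := exists_subset_card_eq hk₃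
  replace hT₁ x hx := hT₁ x (hS₁ hx)
  replace hT₂ x hx := hT₂ x (hS₂ hx)
  replace hT₃ x hx := hT₃ x (hS₃ hx)
  have hunion : #(fan S₁ p₁ ∪ fan S₂ p₂ ∪ fan S₃ p₃) ≤ B.ncard := by
    rw [← Set.ncard_coe_finset]
    refine Set.ncard_le_ncard ?_ B.toFinite
    simp only [coe_union]
    exact Set.union_subset (Set.union_subset (coe_fan_subset hT₁) (coe_fan_subset hT₂))
      (coe_fan_subset hT₃)
  have h₁ := card_fan_inter_fan_le h₁₂ S₁ S₂
  have h₂ := card_fan_inter_fan_le h₁₃ S₁ S₃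
  have h₃ := card_fan_inter_fan_le h₂₃ S₂ S₃
  have := card_add_card_add_card_le (fan S₁ p₁) (fan S₂ p₂) (fan S₃ p₃)
  rw [card_fan hT₁, card_fan hT₂, card_fan hT₃] at this
  simp only [hk₂, hk₃] at h₁ h₂ h₃ this
  rw [Nat.mul_sub, Nat.mul_assoc, Nat.mul_assoc]
  omega

end Counting

section Plane

variable {F : Type} [Field F] [Fintype F] [DecidableEq F] {B : Set (Fin 2 → F)}

theorem card_le_of_isTangent {S : Finset (Fin 2 → F)} {p : ℙ F (Fin 2 → F)}
    (hS : ∀ x ∈ S, IsTangent B x p) : #S ≤ Fintype.card F := by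
  have := card_mul_card_le_of_isTangent hS
  rw [pow_two] at this
  exact Nat.le_of_mul_le_mul_right this Fintype.card_pos

theorem ncard_compl_le_of_isTangent [DecidablePred (· ∈ B)] [Fintype (ℙ F (Fin 2 → F))]
    [DecidableEq (ℙ F (Fin 2 → F))]
    {D : (Fin 2 → F) → ℙ F (Fin 2 → F)} (hD : ∀ x ∉ B, IsTangent B x (D x)) (k : ℕ) :
    Bᶜ.ncard ≤ #{p | k ≤ #{x | x ∉ B ∧ D x = p}} * Fintype.card F +
      (Fintype.card F + 1) * (k - 1) := by
  have hdirs : Fintype.card (ℙ F (Fin 2 → F)) = Fintype.card F + 1 := by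
    rw [Fintype.card_eq_nat_card, Projectivization.card_of_finrank_two F _
      (Module.finrank_fin_fun F), Nat.card_eq_fintype_card]
  have hfibres : Bᶜ.ncard = ∑ p, #{x | x ∉ B ∧ D x = p} := by
    rw [Set.ncard_eq_toFinset_card', card_eq_sum_card_fiberwise fun x _ => mem_univ (D x)]
    refine sum_congr rfl fun p _ => congrArg card (ext fun x => ?_)
    simp
  have hclass (p) : #{x | x ∉ B ∧ D x = p} ≤ Fintype.card F :=
    card_le_of_isTangent fun _ => isTangent_of_mem_filter hD
  rw [hfibres, ← hdirs]
  exact sum_le_card_filter_mul_add _ hclass k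

end Plane

theorem stmt_14 (F : Type) [Field F] [Fintype F]
    (B : Set (Fin 2 → F)) (hB : IsNikodym B) :
    min (Fintype.card F ^ 2 - (Fintype.card F / 3) * (Fintype.card F - 1) - 2 * Fintype.card F)
      (3 * (Fintype.card F / 3) * (Fintype.card F - 1 - Fintype.card F / 3)) ≤ B.ncard := by
  classical
  have : Fintype (ℙ F (Fin 2 → F)) := Fintype.ofFinite _
  set k := Fintype.card F / 3 with hk
  choose! D hD using fun x (hx : x ∉ B) => hB.exists_isTangent hx
  by_cases hrich : 2 < #{p | k ≤ #{x | x ∉ B ∧ D x = p}}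
  · obtain ⟨p₁, hp₁, p₂, hp₂, p₃, hp₃, h₁₂, h₁₃, h₂₃⟩ := two_lt_card.mp hrich
    simp only [mem_filter, mem_univ, true_and] at hp₁ hp₂ hp₃
    exact (min_le_right _ _).trans
      (three_mul_mul_le_ncard_of_isTangent h₁₂ h₁₃ h₂₃ (fun _ => isTangent_of_mem_filter hD)
      (fun _ => isTangent_of_mem_filter hD) (fun _ => isTangent_of_mem_filter hD) hp₁ hp₂ hp₃)
  · have hcompl := ncard_compl_le_of_isTangent hD k
    have hsplit := Set.ncard_add_ncard_compl B
    rw [Nat.card_eq_fintype_card, Fintype.card_fun, Fintype.card_fin] at hsplit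
    have hk' := Nat.add_one_mul_sub_one_le_mul_sub_one (q := Fintype.card F) (k := k) (by omega)
    have hrich' := Nat.mul_le_mul_right (Fintype.card F) (not_lt.mp hrich)
    exact (min_le_left _ _).trans (by omega)
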